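/- arXiv:2004.00028 — 2 statements merged into one kernel-verified Lean document; each statement's English description precedes it below -/
import Mathlib

section
/- Let μ be a translation-invariant probability measure on A^{ℤ^d} that is locally mixing with rate function ρ. For any integers n ≥ m ≥ 1 and any finite S ⊆ ℤ^d ∖ Λ_n, set ε = sqrt(ρ(n−m) + |Λ_n ∖ Λ_m|/|Λ_n|). Then the set G ⊆ A^S of feasible configurations ξ with d̄(μ|^ξ_{Λ_n}, μ|_{Λ_n}) ≤ ε satisfies μ(G) ≥ 1 − ε. Consequently, every translation-invariant locally mixing measure on A^{ℤ^d} is Følner independent. -/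
open MeasureTheory ProbabilityTheory Filter
open scoped Classical ProbabilityTheory

/-- The lattice `ℤ^d`. -/
abbrev Vd (d : ℕ) := Fin d → ℤ

/-- The box `Λ_n = [-n,n]^d ∩ ℤ^d`, as a finite set. -/
noncomputable def BoxFd (d n : ℕ) : Finset (Vd d) := Fintype.piFinset fun _ => Finset.Icc (-(n : ℤ)) (n : ℤ)

/-- Translation action of `ℤ^d` on configurations. -/
def shiftD {d : ℕ} {A : Type*} (u : Vd d) (x : Vd d → A) : Vd d → A := fun v => x (v + u)

/-- The cylinder event fixing the restriction to `S` to agree with `f`. -/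
def cylS {d : ℕ} {A : Type*} (S : Finset (Vd d)) (f : Vd d → A) : Set (Vd d → A) :=
  {g | ∀ v ∈ S, g v = f v}

/-- A rate function: decreasing, nonnegative, tending to `0`. -/
def RateFunD (ρ : ℕ → ℝ) : Prop :=
  Antitone ρ ∧ (∀ k, 0 ≤ ρ k) ∧ Tendsto ρ atTop (nhds 0)

/-- A probability measure `μ` on `A^{ℤ^d}` is locally mixing with rate `ρ`. -/
def LocallyMixingOne {d : ℕ} {A : Type*} [MeasurableSpace A]
    (μ : Measure (Vd d → A)) (ρ : ℕ → ℝ) : Prop :=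
  ∀ n : ℕ, 1 ≤ n →
    ∃ π : Measure ((Vd d → A) × (Vd d → A)),
      π.fst = μ ∧ π.snd = μ ∧
      IndepFun (fun x (v : ↥((↑(BoxFd d n) : Set (Vd d))ᶜ)) => x.1 ↑v) Prod.snd π ∧
      ∀ k ≤ n, ∀ v ∈ BoxFd d k, π {x | x.1 v ≠ x.2 v} ≤ ENNReal.ofReal (ρ (n - k))

/-- The `d̄`-distance, over the window `W`, between (the marginals on `W` of) two measures:
the infimum over couplings of the average probability of disagreement at a vertex of `W`. -/
noncomputable def dbar {d : ℕ} {A : Type*} [MeasurableSpace A] (W : Finset (Vd d))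
    (ν lam : Measure (Vd d → A)) : ℝ :=
  sInf {r | ∃ π : Measure ((Vd d → A) × (Vd d → A)),
    π.fst = ν ∧ π.snd = lam ∧
    r = (W.card : ℝ)⁻¹ * ∑ v ∈ W, (π {x | x.1 v ≠ x.2 v}).toReal}

/-- Følner independence of a measure on `A^{ℤ^d}`. -/
def FolnerIndep {d : ℕ} {A : Type*} [MeasurableSpace A] (μ : Measure (Vd d → A)) : Prop :=
  ∀ ε : ℝ, 0 < ε → ∃ N : ℕ, ∀ n ≥ N, ∀ S : Finset (Vd d), (∀ v ∈ S, v ∉ BoxFd d n) →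
    μ {f | μ (cylS S f) ≠ 0 ∧ dbar (BoxFd d n) (μ[|cylS S f]) μ < ε} ≥
      ENNReal.ofReal (1 - ε)

/-!
Let `π` be the self-coupling of `μ` given by local mixing at scale `n`. Conditioned on the
configuration `ξ` of its first copy on `S` (more precisely, on the measurable hull of that
cylinder), the second copy is still distributed as `μ`, because `S` lies outside `Λ_n`; so the
conditioned `π` couples `μ|^ξ` with `μ`, and `d̄(μ|^ξ_{Λ_n}, μ|_{Λ_n})` is at most the conditional
average disagreement `r(ξ)` of `π` on `Λ_n`. Averaged over `ξ`, `r` becomes the unconditional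
average disagreement, which is at most `ρ(n-m)` on `Λ_m` and at most `1` on `Λ_n \ Λ_m`, hence at
most `ε²`. Markov's inequality bounds the probability of `r(ξ) > ε` by `ε`. Følner independence
follows by fixing `n - m` with `ρ(n - m)` small and letting `n → ∞`.
-/

open scoped ENNReal

theorem pi_measurableAtom_subset_measurableAtom {ι A : Type*} [MeasurableSpace A] (g : ι → A) :
    Set.univ.pi (fun i => measurableAtom (g i)) ⊆ measurableAtom g := by
  intro g' hg'
  -- The sets saturated for coordinatewise atom-equivalence form a σ-algebra containing the
  -- cylinders, hence every measurable set.
  let saturated : MeasurableSpace (ι → A) :=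
    { MeasurableSet' := fun U =>
        ∀ g g' : ι → A, (∀ i, g' i ∈ measurableAtom (g i)) → g ∈ U → g' ∈ U
      measurableSet_empty := fun _ _ _ h => h
      measurableSet_compl := fun U hU g g' h hg hg' => hg <| hU g' g (fun i => by
        rw [measurableAtom_eq_of_mem (h i)]; exact mem_measurableAtom_self _) hg'
      measurableSet_iUnion := fun U hU g g' h hg => by
        obtain ⟨j, hj⟩ := Set.mem_iUnion.1 hg
        exact Set.mem_iUnion.2 ⟨j, hU j g g' h hj⟩ }
  have hle : MeasurableSpace.pi ≤ saturated := iSup_le fun i =>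
    MeasurableSpace.comap_le_iff_le_map.2 fun B hB g g' h hg => measurableAtom_subset hB hg (h i)
  simp only [measurableAtom, Set.mem_iInter]
  exact fun U hgU hU => hle U hU g g' (fun i => hg' i (Set.mem_univ i)) hgU

section CylinderHull

variable {d : ℕ} {A : Type*} [MeasurableSpace A]

/-- The measurable hull of `cylS S f`: cylinders need not be measurable unless the σ-algebra of
`A` separates points. -/
def cylHull (S : Finset (Vd d)) (f : Vd d → A) : Set (Vd d → A) :=
  {g | ∀ v ∈ S, g v ∈ measurableAtom (f v)}

theorem mem_cylHull_self (S : Finset (Vd d)) (f : Vd d → A) : f ∈ cylHull S f :=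
  fun v _ => mem_measurableAtom_self (f v)

theorem cylHull_eq_preimage (S : Finset (Vd d)) (f : Vd d → A) :
    cylHull S f =
      (fun (g : Vd d → A) (v : S) => g v) ⁻¹' Set.univ.pi fun v => measurableAtom (f v) := by
  ext g
  simp [cylHull]

theorem measurableSet_cylHull [Countable A] (S : Finset (Vd d)) (f : Vd d → A) :
    MeasurableSet (cylHull S f) := by
  rw [cylHull_eq_preimage]
  exact (measurable_pi_lambda _ fun v => measurable_pi_apply _)
    (.univ_pi fun v => .measurableAtom_of_countable _)

theorem cylS_subset_cylHull (S : Finset (Vd d)) (f : Vd d → A) : cylS S f ⊆ cylHull S f :=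
  fun g hg v hv => by rw [hg v hv]; exact mem_measurableAtom_self _

theorem cylHull_subset_of_cylS_subset {S : Finset (Vd d)} {f : Vd d → A} {U : Set (Vd d → A)}
    (hU : MeasurableSet U) (h : cylS S f ⊆ U) : cylHull S f ⊆ U := by
  intro g hg
  have hpiece : S.piecewise f g ∈ U := h fun v hv => S.piecewise_eq_of_mem f g hv
  refine measurableAtom_subset hU hpiece (pi_measurableAtom_subset_measurableAtom _ fun v _ => ?_)
  dsimp only
  by_cases hv : v ∈ S
  · rw [S.piecewise_eq_of_mem f g hv]; exact hg v hv
  · rw [S.piecewise_eq_of_notMem f g hv]; exact mem_measurableAtom_self _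

theorem cylHull_subset_toMeasurable (μ : Measure (Vd d → A)) (S : Finset (Vd d))
    (f : Vd d → A) : cylHull S f ⊆ toMeasurable μ (cylS S f) :=
  cylHull_subset_of_cylS_subset (measurableSet_toMeasurable μ _) (subset_toMeasurable μ _)

theorem measure_cylHull (μ : Measure (Vd d → A)) (S : Finset (Vd d)) (f : Vd d → A) :
    μ (cylHull S f) = μ (cylS S f) :=
  le_antisymm ((measure_mono (cylHull_subset_toMeasurable μ S f)).trans_eq
    (measure_toMeasurable _)) (measure_mono (cylS_subset_cylHull S f))

theorem cond_cylHull (μ : Measure (Vd d → A)) [IsFiniteMeasure μ] (S : Finset (Vd d))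
    (f : Vd d → A) : μ[|cylHull S f] = μ[|cylS S f] := by
  have hrestrict : μ.restrict (cylHull S f) = μ.restrict (cylS S f) :=
    le_antisymm
      ((Measure.restrict_mono (cylHull_subset_toMeasurable μ S f) le_rfl).trans_eq
        (Measure.restrict_toMeasurable (measure_ne_top μ _)))
      (Measure.restrict_mono (cylS_subset_cylHull S f) le_rfl)
  rw [ProbabilityTheory.cond, ProbabilityTheory.cond, measure_cylHull, hrestrict]

theorem cylHull_eq_of_mem {S : Finset (Vd d)} {f g : Vd d → A} (h : g ∈ cylHull S f) :
    cylHull S g = cylHull S f := by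
  ext g'
  exact forall₂_congr fun v hv => by rw [measurableAtom_eq_of_mem (h v hv)]

theorem finite_range_cylHull [Finite A] (S : Finset (Vd d)) :
    (Set.range (cylHull (A := A) S)).Finite := by
  refine (Set.finite_range fun ζ : S → A =>
    (fun (g : Vd d → A) (v : S) => g v) ⁻¹' Set.univ.pi fun v => measurableAtom (ζ v)).subset ?_
  rintro _ ⟨f, rfl⟩
  exact ⟨fun v => f v, (cylHull_eq_preimage S f).symm⟩

theorem pairwiseDisjoint_range_cylHull (S : Finset (Vd d)) :
    (Set.range (cylHull (A := A) S)).PairwiseDisjoint id := by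
  rintro _ ⟨f, rfl⟩ _ ⟨f', rfl⟩ hne
  refine Set.disjoint_left.2 fun g hg hg' => hne ?_
  rw [← cylHull_eq_of_mem hg, ← cylHull_eq_of_mem hg']

end CylinderHull

section Conditioning

variable {Ω β γ : Type*} [MeasurableSpace Ω] [MeasurableSpace β] [MeasurableSpace γ]

theorem map_cond_preimage {μ : Measure Ω} {X : Ω → β} (hX : Measurable X) {t : Set β}
    (ht : MeasurableSet t) : (μ[|X ⁻¹' t]).map X = (μ.map X)[|t] := by
  ext B hB
  rw [Measure.map_apply hX hB, cond_apply (hX ht), cond_apply ht, Measure.map_apply hX ht,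
    Measure.map_apply hX (ht.inter hB), Set.preimage_inter]

theorem ProbabilityTheory.IndepFun.map_cond_preimage_left {μ : Measure Ω} [IsFiniteMeasure μ]
    {X : Ω → β} {Y : Ω → γ} (h : IndepFun X Y μ) (hX : Measurable X) (hY : Measurable Y)
    {t : Set β} (ht : MeasurableSet t) (hμt : μ (X ⁻¹' t) ≠ 0) :
    (μ[|X ⁻¹' t]).map Y = μ.map Y := by
  ext B hB
  rw [Measure.map_apply hY hB, cond_apply (hX ht), h.measure_inter_preimage_eq_mul t B ht hB,
    ← mul_assoc, ENNReal.inv_mul_cancel hμt (measure_ne_top μ _), one_mul,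
    Measure.map_apply hY hB]

theorem sum_toReal_measure_mul_cond_eq {ι : Type*} (μ : Measure Ω) [IsFiniteMeasure μ]
    (I : Finset ι) {s : ι → Set Ω} (hs : ∀ i ∈ I, MeasurableSet (s i))
    (hd : (I : Set ι).PairwiseDisjoint s) (hcover : ⋃ i ∈ I, s i = Set.univ) (M : Set Ω) :
    ∑ i ∈ I, (μ (s i)).toReal * (μ[M | s i]).toReal = (μ M).toReal := by
  have htotal : ∑ i ∈ I, μ (s i) • μ[|s i] = μ := by
    ext E hE
    calc (∑ i ∈ I, μ (s i) • μ[|s i]) E = ∑ i ∈ I, μ (s i ∩ E) := by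
          rw [Measure.coe_finsetSum, Finset.sum_apply]
          refine Finset.sum_congr rfl fun i hi => ?_
          rw [Measure.smul_apply, smul_eq_mul, mul_comm, cond_mul_eq_inter (hs i hi)]
      _ = μ (⋃ i ∈ I, s i ∩ E) :=
          (measure_biUnion_finset (hd.mono fun _ => Set.inter_subset_left)
            fun i hi => (hs i hi).inter hE).symm
      _ = μ E := by rw [← Set.iUnion₂_inter, hcover, Set.univ_inter]
  -- `M` need not be measurable: `htotal` is an identity of measures, evaluated at `M`.
  conv_rhs => rw [← htotal, Measure.coe_finsetSum, Finset.sum_apply]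
  simp only [Measure.smul_apply, smul_eq_mul]
  rw [ENNReal.toReal_sum fun i _ => ENNReal.mul_ne_top (measure_ne_top μ _)
    (measure_ne_top _ _)]
  simp only [ENNReal.toReal_mul]

theorem isProbabilityMeasure_of_fst_eq {π : Measure (Ω × β)} {μ : Measure Ω}
    [IsProbabilityMeasure μ] (h : π.fst = μ) :
    IsProbabilityMeasure π :=
  ⟨by rw [← Measure.fst_univ, h, measure_univ]⟩

theorem ofReal_one_sub_le_of_measure_compl_le {μ : Measure Ω} [IsProbabilityMeasure μ]
    {s : Set Ω} {ε : ℝ} (hε : 0 ≤ ε)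
    (h : μ sᶜ ≤ ENNReal.ofReal ε) : ENNReal.ofReal (1 - ε) ≤ μ s := by
  rw [ENNReal.ofReal_sub _ hε, ENNReal.ofReal_one, tsub_le_iff_right]
  calc (1 : ℝ≥0∞) = μ Set.univ := measure_univ.symm
    _ ≤ μ s + μ sᶜ := measure_univ_le_add_compl s
    _ ≤ μ s + ENNReal.ofReal ε := add_le_add_right h _

theorem measure_setOf_measure_eq_zero (μ : Measure Ω)
    {c : Ω → Set Ω} (hc : (Set.range c).Countable) (hmem : ∀ x, x ∈ c x) :
    μ {x | μ (c x) = 0} = 0 := by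
  have hsub : {x | μ (c x) = 0} ⊆ ⋃ t ∈ Set.range c ∩ {t | μ t = 0}, t :=
    fun x hx => Set.mem_biUnion (x := c x) ⟨⟨x, rfl⟩, hx⟩ (hmem x)
  exact measure_mono_null hsub
    ((measure_biUnion_null_iff (hc.mono Set.inter_subset_left)).2 fun t ht => ht.2)

theorem sum_toReal_measure_le_of_subset {ι : Type*} {π : Measure Ω}
    [IsProbabilityMeasure π] {M : ι → Set Ω} {V W : Finset ι} (hVW : V ⊆ W) {δ : ℝ}
    (hδ : 0 ≤ δ) (hV : ∀ v ∈ V, π (M v) ≤ ENNReal.ofReal δ) :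
    ∑ v ∈ W, (π (M v)).toReal ≤ V.card * δ + (W.card - V.card) := by
  rw [← Finset.sum_sdiff hVW]
  have hin : ∑ v ∈ V, (π (M v)).toReal ≤ V.card * δ := by
    simpa using Finset.sum_le_card_nsmul V _ δ fun v hv =>
      ENNReal.toReal_le_of_le_ofReal hδ (hV v hv)
  have hout : ∑ v ∈ W \ V, (π (M v)).toReal ≤ (W \ V).card := by
    simpa using Finset.sum_le_card_nsmul (W \ V) _ 1 fun v _ =>
      ENNReal.toReal_le_of_le_ofReal zero_le_one (by rw [ENNReal.ofReal_one]; exact prob_le_one)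
  rw [Finset.card_sdiff_of_subset hVW, Nat.cast_sub (Finset.card_le_card hVW)] at hout
  linarith

end Conditioning

theorem sum_filter_lt_le_of_sum_mul_le_sq {ι : Type*} (T : Finset ι) {w r : ι → ℝ} {ε : ℝ}
    (hw : ∀ t ∈ T, 0 ≤ w t) (hr : ∀ t ∈ T, 0 ≤ r t) (hε : 0 ≤ ε)
    (h : ∑ t ∈ T, w t * r t ≤ ε ^ 2) : ∑ t ∈ T with ε < r t, w t ≤ ε := by
  have hmarkov : ε * ∑ t ∈ T with ε < r t, w t ≤ ε ^ 2 := by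
    rw [Finset.mul_sum]
    calc ∑ t ∈ T with ε < r t, ε * w t ≤ ∑ t ∈ T with ε < r t, w t * r t :=
          Finset.sum_le_sum fun t ht => by
            rw [mul_comm]
            exact mul_le_mul_of_nonneg_left (Finset.mem_filter.1 ht).2.le
              (hw t (Finset.mem_filter.1 ht).1)
      _ ≤ ∑ t ∈ T, w t * r t := Finset.sum_le_sum_of_subset_of_nonneg (Finset.filter_subset _ _)
          fun t ht _ => mul_nonneg (hw t ht) (hr t ht)
      _ ≤ ε ^ 2 := h
  rcases hε.lt_or_eq with hpos | rfl
  · nlinarith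
  · -- with `ε = 0` every product `w t * r t` vanishes, so `w t = 0` wherever `0 < r t`
    have hzero : ∀ t ∈ T, w t * r t = 0 := (Finset.sum_eq_zero_iff_of_nonneg fun t ht =>
      mul_nonneg (hw t ht) (hr t ht)).1 (le_antisymm (by simpa using h)
        (Finset.sum_nonneg fun t ht => mul_nonneg (hw t ht) (hr t ht)))
    refine (Finset.sum_eq_zero fun t ht => ?_).le
    obtain ⟨htT, hrt⟩ := Finset.mem_filter.1 ht
    simpa [hrt.ne'] using hzero t htT

section ConditionalDbar

variable {d : ℕ} {A : Type*} [MeasurableSpace A]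

theorem dbar_le_of_fst_snd (W : Finset (Vd d)) {ν lam : Measure (Vd d → A)}
    (π : Measure ((Vd d → A) × (Vd d → A))) (h₁ : π.fst = ν) (h₂ : π.snd = lam) :
    dbar W ν lam ≤ (W.card : ℝ)⁻¹ * ∑ v ∈ W, (π {x | x.1 v ≠ x.2 v}).toReal :=
  csInf_le ⟨0, by rintro _ ⟨π', -, -, rfl⟩; positivity⟩ ⟨π, h₁, h₂, rfl⟩

theorem dbar_cond_cylHull_le [Countable A] {μ : Measure (Vd d → A)}
    {π : Measure ((Vd d → A) × (Vd d → A))} [IsFiniteMeasure π] (hfst : π.fst = μ)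
    (hsnd : π.snd = μ) {S : Finset (Vd d)}
    (hind : IndepFun (fun x (v : S) => x.1 v) Prod.snd π) (W : Finset (Vd d))
    {f : Vd d → A} (hf : μ (cylHull S f) ≠ 0) :
    dbar W (μ[|cylHull S f]) μ ≤ (W.card : ℝ)⁻¹ *
      ∑ v ∈ W, (π[{x | x.1 v ≠ x.2 v} | Prod.fst ⁻¹' cylHull S f]).toReal := by
  have hpre : Prod.fst ⁻¹' cylHull S f =
      (fun (x : (Vd d → A) × (Vd d → A)) (v : S) => x.1 v) ⁻¹'
        Set.univ.pi fun v => measurableAtom (f v) := by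
    rw [cylHull_eq_preimage]; rfl
  have hX : Measurable fun x : (Vd d → A) × (Vd d → A) => fun v : S => x.1 v :=
    measurable_pi_lambda _ fun v => (measurable_pi_apply _).comp measurable_fst
  refine dbar_le_of_fst_snd W _ ?_ ?_
  · rw [Measure.fst, map_cond_preimage measurable_fst (measurableSet_cylHull S f), ← Measure.fst,
      hfst]
  · rw [Measure.snd, hpre, hind.map_cond_preimage_left hX measurable_snd
      (.univ_pi fun v => .measurableAtom_of_countable _), ← Measure.snd, hsnd]
    rwa [← hpre, ← Measure.fst_apply (measurableSet_cylHull S f), hfst]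


theorem sum_measure_preimage_cylHull_mul_cond_eq [Finite A] {β : Type*} [MeasurableSpace β]
    (π : Measure ((Vd d → A) × β)) [IsFiniteMeasure π] (S : Finset (Vd d))
    (M : Set ((Vd d → A) × β)) :
    ∑ t ∈ (finite_range_cylHull S).toFinset,
      (π (Prod.fst ⁻¹' t)).toReal * (π[M | Prod.fst ⁻¹' t]).toReal = (π M).toReal := by
  refine sum_toReal_measure_mul_cond_eq π _ ?_ ?_ ?_ M
  · simp only [Set.Finite.mem_toFinset]
    rintro _ ⟨f, rfl⟩
    exact measurable_fst (measurableSet_cylHull S f)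
  · rw [Set.Finite.coe_toFinset]
    exact fun t ht t' ht' hne => (pairwiseDisjoint_range_cylHull S ht ht' hne).preimage _
  · refine Set.eq_univ_of_forall fun x => Set.mem_iUnion₂.2 ⟨cylHull S x.1, ?_, ?_⟩
    · simp
    · exact mem_cylHull_self S x.1

theorem ofReal_one_sub_le_measure_dbar_cond_le [Finite A] (μ : Measure (Vd d → A))
    [IsProbabilityMeasure μ] {π : Measure ((Vd d → A) × (Vd d → A))} (hfst : π.fst = μ)
    (hsnd : π.snd = μ) {S : Finset (Vd d)}
    (hind : IndepFun (fun x (v : S) => x.1 v) Prod.snd π) (W : Finset (Vd d)) {ε : ℝ}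
    (hε : 0 ≤ ε)
    (hdis : (W.card : ℝ)⁻¹ * ∑ v ∈ W, (π {x | x.1 v ≠ x.2 v}).toReal ≤ ε ^ 2) :
    ENNReal.ofReal (1 - ε) ≤ μ {f | μ (cylS S f) ≠ 0 ∧ dbar W (μ[|cylS S f]) μ ≤ ε} := by
  have := isProbabilityMeasure_of_fst_eq hfst
  set T := (finite_range_cylHull (A := A) S).toFinset
  set r : Set (Vd d → A) → ℝ := fun t => (W.card : ℝ)⁻¹ *
    ∑ v ∈ W, (π[{x | x.1 v ≠ x.2 v} | Prod.fst ⁻¹' t]).toReal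
  have hmean : ∑ t ∈ T, (μ t).toReal * r t ≤ ε ^ 2 := by
    refine hdis.trans' (le_of_eq ?_)
    simp only [r, Finset.mul_sum, mul_left_comm _ (W.card : ℝ)⁻¹]
    rw [Finset.sum_comm]
    refine Finset.sum_congr rfl fun v _ => ?_
    rw [← sum_measure_preimage_cylHull_mul_cond_eq π S, Finset.mul_sum]
    refine Finset.sum_congr rfl fun t ht => ?_
    obtain ⟨f, rfl⟩ := (Set.Finite.mem_toFinset _).1 ht
    rw [← Measure.fst_apply (measurableSet_cylHull S f), hfst]
  have hbad : {f | μ (cylS S f) ≠ 0 ∧ dbar W (μ[|cylS S f]) μ ≤ ε}ᶜ ⊆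
      {f | μ (cylHull S f) = 0} ∪ ⋃ t ∈ {t ∈ T | ε < r t}, t := by
    intro f hf
    simp only [Set.mem_compl_iff, Set.mem_ofPred, not_and, not_le, ← measure_cylHull μ,
      ← cond_cylHull μ] at hf
    by_cases h0 : μ (cylHull S f) = 0
    · exact Or.inl h0
    · refine Or.inr (Set.mem_biUnion (Finset.mem_filter.2 ⟨by simp [T], ?_⟩) (mem_cylHull_self S f))
      exact (hf h0).trans_le (dbar_cond_cylHull_le hfst hsnd hind W h0)
  have hmarkov := sum_filter_lt_le_of_sum_mul_le_sq T (fun _ _ => ENNReal.toReal_nonneg)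
    (fun _ _ => by positivity) hε hmean
  refine ofReal_one_sub_le_of_measure_compl_le hε ?_
  calc _ ≤ μ {f | μ (cylHull S f) = 0} + μ (⋃ t ∈ {t ∈ T | ε < r t}, t) :=
        (measure_mono hbad).trans (measure_union_le _ _)
    _ ≤ 0 + ∑ t ∈ T with ε < r t, μ t :=
        add_le_add (measure_setOf_measure_eq_zero μ (finite_range_cylHull S).countable
          (mem_cylHull_self S)).le (measure_biUnion_finset_le _ _)
    _ = ENNReal.ofReal (∑ t ∈ T with ε < r t, (μ t).toReal) := by
        rw [zero_add, ENNReal.ofReal_sum_of_nonneg fun _ _ => ENNReal.toReal_nonneg]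
        exact Finset.sum_congr rfl fun t _ => (ENNReal.ofReal_toReal (measure_ne_top μ t)).symm
    _ ≤ ENNReal.ofReal ε := ENNReal.ofReal_le_ofReal hmarkov

end ConditionalDbar

theorem card_BoxFd (d n : ℕ) : (BoxFd d n).card = (2 * n + 1) ^ d := by
  rw [BoxFd, Fintype.card_piFinset]
  have : (Finset.Icc (-(n : ℤ)) (n : ℤ)).card = 2 * n + 1 := by
    rw [Int.card_Icc]
    omega
  simp [this]

theorem BoxFd_mono (d : ℕ) {m n : ℕ} (h : m ≤ n) : BoxFd d m ⊆ BoxFd d n := by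
  intro v hv
  simp only [BoxFd, Fintype.mem_piFinset, Finset.mem_Icc] at hv ⊢
  exact fun i => ⟨by linarith [(hv i).1, (show (m : ℤ) ≤ n by exact_mod_cast h)],
    by linarith [(hv i).2, (show (m : ℤ) ≤ n by exact_mod_cast h)]⟩

theorem card_BoxFd_sub_div_le (d : ℕ) {m n : ℕ} (h : m ≤ n) :
    ((BoxFd d n).card - (BoxFd d m).card : ℝ) / (BoxFd d n).card ≤
      2 * d * (n - m : ℕ) / (2 * n + 1) := by
  have ha : (0 : ℝ) < 2 * n + 1 := by positivity
  have hratio : (2 * m + 1 : ℝ) / (2 * n + 1) - 1 = -(2 * (n - m : ℕ) / (2 * n + 1)) := by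
    rw [Nat.cast_sub h]; field_simp; ring
  have hbern := one_add_mul_le_pow (a := (2 * m + 1 : ℝ) / (2 * n + 1) - 1)
    (by have := div_nonneg (by positivity : (0 : ℝ) ≤ 2 * m + 1) ha.le; linarith) d
  rw [add_sub_cancel, hratio] at hbern
  simp only [card_BoxFd, Nat.cast_pow, Nat.cast_add, Nat.cast_mul, Nat.cast_ofNat, Nat.cast_one]
  rw [sub_div, div_self (by positivity), ← div_pow]
  have hrearrange :
      2 * (d : ℝ) * (n - m : ℕ) / (2 * n + 1) = d * (2 * (n - m : ℕ) / (2 * n + 1)) := by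
    ring
  linarith

section LocallyMixing

variable {d : ℕ} {A : Type*} [MeasurableSpace A]

def ConditionalDbarEstimate (μ : Measure (Vd d → A)) (ρ : ℕ → ℝ) : Prop :=
  ∀ n m : ℕ, 1 ≤ m → m ≤ n → ∀ S : Finset (Vd d), (∀ v ∈ S, v ∉ BoxFd d n) →
    μ {f | μ (cylS S f) ≠ 0 ∧
        dbar (BoxFd d n) (μ[|cylS S f]) μ ≤
          Real.sqrt (ρ (n - m) +
            ((BoxFd d n).card - (BoxFd d m).card : ℝ) / (BoxFd d n).card)} ≥
      ENNReal.ofReal (1 - Real.sqrt (ρ (n - m) +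
        ((BoxFd d n).card - (BoxFd d m).card : ℝ) / (BoxFd d n).card))

theorem LocallyMixingOne.conditionalDbarEstimate [Finite A] {μ : Measure (Vd d → A)}
    [IsProbabilityMeasure μ] {ρ : ℕ → ℝ} (hρ : ∀ k, 0 ≤ ρ k) (hLM : LocallyMixingOne μ ρ) :
    ConditionalDbarEstimate μ ρ := by
  intro n m hm hmn S hS
  obtain ⟨π, hfst, hsnd, hindep, hbd⟩ := hLM n (hm.trans hmn)
  have := isProbabilityMeasure_of_fst_eq hfst
  have hindS : IndepFun (fun x (v : S) => x.1 v) Prod.snd π :=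
    hindep.comp (φ := fun y (v : S) => y ⟨v, hS v v.2⟩)
      (measurable_pi_lambda _ fun v => measurable_pi_apply _) measurable_id
  have hcard : (0 : ℝ) < (BoxFd d n).card := by rw [card_BoxFd]; positivity
  have hcard_le : ((BoxFd d m).card : ℝ) ≤ (BoxFd d n).card := by
    exact_mod_cast Finset.card_le_card (BoxFd_mono d hmn)
  have hsum := sum_toReal_measure_le_of_subset (BoxFd_mono d hmn) (hρ (n - m)) (hbd m hmn)
  refine ofReal_one_sub_le_measure_dbar_cond_le μ hfst hsnd hindS _ (Real.sqrt_nonneg _) ?_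
  rw [Real.sq_sqrt (add_nonneg (hρ _) (div_nonneg (by linarith) hcard.le)), inv_mul_le_iff₀ hcard,
    mul_add, mul_div_cancel₀ _ hcard.ne']
  nlinarith [hρ (n - m)]

theorem ConditionalDbarEstimate.folnerIndep {μ : Measure (Vd d → A)} {ρ : ℕ → ℝ}
    (hest : ConditionalDbarEstimate μ ρ) (hρ : Tendsto ρ atTop (nhds 0)) : FolnerIndep μ := by
  intro ε hε
  have hε2 : 0 < ε ^ 2 / 2 := by positivity
  obtain ⟨K, hK⟩ := (hρ.eventually (gt_mem_nhds hε2)).exists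
  have hboundary : Tendsto (fun n : ℕ => 2 * d * K / (2 * n + 1 : ℝ)) atTop (nhds 0) :=
    tendsto_const_nhds.div_atTop (tendsto_atTop_add_const_right _ _
      (tendsto_natCast_atTop_atTop.const_mul_atTop two_pos))
  obtain ⟨N, hN⟩ := eventually_atTop.1
    ((hboundary.eventually (gt_mem_nhds hε2)).and (eventually_ge_atTop (K + 1)))
  refine ⟨N, fun n hn S hS => ?_⟩
  obtain ⟨hsmall, hKn⟩ := hN n hn
  have hnK : n - (n - K) = K := by omega
  have hgap := card_BoxFd_sub_div_le d (Nat.sub_le n K)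
  rw [hnK] at hgap
  have hsqrt : Real.sqrt (ρ (n - (n - K)) +
      ((BoxFd d n).card - (BoxFd d (n - K)).card : ℝ) / (BoxFd d n).card) < ε := by
    rw [Real.sqrt_lt' hε, hnK]
    linarith
  refine le_trans (ENNReal.ofReal_le_ofReal (by linarith))
    ((hest n (n - K) (by omega) (Nat.sub_le n K) S hS).trans (measure_mono ?_))
  exact fun f hf => ⟨hf.1, hf.2.trans_lt hsqrt⟩

end LocallyMixing

theorem locally_mixing_implies_folner_independent_general
    {d : ℕ} {A : Type*} [Fintype A] [MeasurableSpace A]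
    (μ : Measure (Vd d → A)) (hprob : IsProbabilityMeasure μ)
    (ρ : ℕ → ℝ) (hρ : RateFunD ρ) (hLM : LocallyMixingOne μ ρ) :
    (∀ n m : ℕ, 1 ≤ m → m ≤ n → ∀ S : Finset (Vd d), (∀ v ∈ S, v ∉ BoxFd d n) →
      μ {f | μ (cylS S f) ≠ 0 ∧
          dbar (BoxFd d n) (μ[|cylS S f]) μ ≤
            Real.sqrt (ρ (n - m) +
              ((BoxFd d n).card - (BoxFd d m).card : ℝ) / (BoxFd d n).card)} ≥
        ENNReal.ofReal (1 - Real.sqrt (ρ (n - m) +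
          ((BoxFd d n).card - (BoxFd d m).card : ℝ) / (BoxFd d n).card))) ∧
    FolnerIndep μ :=
  have hest := hLM.conditionalDbarEstimate hρ.2.1
  ⟨hest, hest.folnerIndep hρ.2.2⟩

/-- A translation-invariant locally mixing measure satisfies the
quantitative conditional `d̄`-estimate, and consequently is Følner independent. -/
theorem locally_mixing_implies_folner_independent
    {d : ℕ} (hd : 1 ≤ d) {A : Type*} [Fintype A] [MeasurableSpace A]
    (μ : Measure (Vd d → A)) (hprob : IsProbabilityMeasure μ)
    (hinv : ∀ u : Vd d, μ.map (shiftD u) = μ)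
    (ρ : ℕ → ℝ) (hρ : RateFunD ρ) (hLM : LocallyMixingOne μ ρ) :
    (∀ n m : ℕ, 1 ≤ m → m ≤ n → ∀ S : Finset (Vd d), (∀ v ∈ S, v ∉ BoxFd d n) →
      μ {f | μ (cylS S f) ≠ 0 ∧
          dbar (BoxFd d n) (μ[|cylS S f]) μ ≤
            Real.sqrt (ρ (n - m) +
              ((BoxFd d n).card - (BoxFd d m).card : ℝ) / (BoxFd d n).card)} ≥
        ENNReal.ofReal (1 - Real.sqrt (ρ (n - m) +
          ((BoxFd d n).card - (BoxFd d m).card : ℝ) / (BoxFd d n).card))) ∧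
    FolnerIndep μ :=
  locally_mixing_implies_folner_independent_general μ hprob ρ hρ hLM
end

section
/- Let D be a domain containing the origin and let h be sampled from φ^0_D, with essential level loops L_0,…,L_M and heights H_0 = 0, H_1, …, H_M. Then, conditioned on the sequence of loops (L_0,…,L_M) (in particular on M), the increments H_{m+1} − H_m for 0 ≤ m ≤ M−1 are independent and each uniformly distributed on {−2, +2}; equivalently, conditioned on M, the sequence (H_m/2)_{m=0}^M is an M-step simple symmetric random walk started from 0. -/
open MeasureTheory ProbabilityTheory Filter
open scoped Classical

/-- The square lattice `ℤ²`. -/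
abbrev V2 := ℤ × ℤ

/-- Nearest-neighbor adjacency in `ℤ²`. -/
def Adj2 (u v : V2) : Prop := |u.1 - v.1| + |u.2 - v.2| = 1

/-- Diagonal (`×`-) adjacency: Euclidean distance `√2`. -/
def XAdj (u v : V2) : Prop := |u.1 - v.1| = 1 ∧ |u.2 - v.2| = 1

/-- A vertex is even if the sum of its coordinates is even. -/
def EvenV (v : V2) : Prop := Even (v.1 + v.2)

/-- Internal vertex boundary of `D`. -/
def bdry (D : Set V2) : Set V2 := {v | v ∈ D ∧ ∃ u, Adj2 u v ∧ u ∉ D}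

/-- Connectivity of a set under a relation, via paths staying in the set. -/
def ConnIn (R : V2 → V2 → Prop) (S : Set V2) : Prop :=
  ∀ x ∈ S, ∀ y ∈ S, ∃ (m : ℕ) (p : ℕ → V2),
    p 0 = x ∧ p m = y ∧ (∀ i ≤ m, p i ∈ S) ∧ ∀ i < m, R (p i) (p (i + 1))

/-- `D ⊆ ℤ²` is simply connected. -/
def SimplyConnected (D : Set V2) : Prop := ConnIn Adj2 D ∧ ConnIn Adj2 Dᶜ

/-- A height function on `D`: gradients of absolute value one along edges of `D`, even
values at even vertices of `D` (and the junk value `0` outside `D`). -/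
def HeightOn (D : Set V2) (h : V2 → ℤ) : Prop :=
  (∀ u ∈ D, ∀ v ∈ D, Adj2 u v → |h u - h v| = 1) ∧
  (∀ v ∈ D, EvenV v → Even (h v)) ∧ (∀ v ∉ D, h v = 0)

/-- A domain: a finite simply connected subset of `ℤ²` whose internal boundary consists of
even vertices. -/
def IsDomain2 (D : Set V2) : Prop :=
  D.Finite ∧ SimplyConnected D ∧ ∀ v ∈ bdry D, EvenV v

/-- The uniform measure on height functions on `D` equal to `τ` on `∂D`. -/
noncomputable def phiT (D : Set V2) (τ : V2 → ℤ) : Measure (V2 → ℤ) :=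
  uniformOn {h | HeightOn D h ∧ ∀ v ∈ bdry D, h v = τ v}

/-- The uniform measure `φ^c_D` on height functions on `D` equal to `c` on `∂D`. -/
noncomputable def phiBC (D : Set V2) (c : ℤ) : Measure (V2 → ℤ) := phiT D fun _ => c

/-- The box `Λ_n = [-n,n]² ∩ ℤ²`. -/
def BoxZ (n : ℕ) : Set V2 := {v | |v.1| ≤ (n : ℤ) ∧ |v.2| ≤ (n : ℤ)}

/-- The box `Λ_r` of real radius `r`. -/
def BoxR (r : ℝ) : Set V2 := {v | |(v.1 : ℝ)| ≤ r ∧ |(v.2 : ℝ)| ≤ r}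

/-- The annulus `A_{m,n} = Λ_n ∖ Λ_m` (integer radii). -/
def AnnZ (m n : ℕ) : Set V2 := BoxZ n \ BoxZ m

/-- The annulus `A_{r,R} = Λ_R ∖ Λ_r` (real radii). -/
def AnnR (r R : ℝ) : Set V2 := BoxR R \ BoxR r

/-- A `×`-loop, described by its vertex set: a finite nonempty `×`-connected set in which
every vertex has exactly two `×`-neighbors. -/
def IsXLoop (L : Set V2) : Prop :=
  L.Finite ∧ L.Nonempty ∧ ConnIn XAdj L ∧ ∀ v ∈ L, {u ∈ L | XAdj u v}.ncard = 2

/-- The bounded region enclosed by `L` (not including `L`): the set of vertices outside `L`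
whose nearest-neighbor connected component in the complement of `L` is finite. -/
def Inside (L : Set V2) : Set V2 :=
  {x | x ∉ L ∧ Set.Finite {y | ∃ (m : ℕ) (p : ℕ → V2),
    p 0 = x ∧ p m = y ∧ (∀ i ≤ m, p i ∉ L) ∧ ∀ i < m, Adj2 (p i) (p (i + 1))}}

/-- `L` surrounds `S`: `S` lies in the bounded region enclosed by `L`. -/
def Surrounds (L S : Set V2) : Prop := S ⊆ Inside L

/-- The region enclosed by `L`, including `L` itself. -/
def Encl (L : Set V2) : Set V2 := L ∪ Inside L

/-- A level loop of `h` of height `c`: a `×`-loop on which `h` is constantly `c`. -/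
def LevelLoop (h : V2 → ℤ) (L : Set V2) (c : ℤ) : Prop :=
  IsXLoop L ∧ ∀ v ∈ L, h v = c

/-- The successor relation in the construction of essential level loops: `L` is a level
loop of height `H`, surrounding the origin, lying strictly inside the region enclosed by
the previous loop `Lm`, with `|H - Hm| = 2`. -/
def NextLoop (h : V2 → ℤ) (Lm : Set V2) (Hm : ℤ) (L : Set V2) (H : ℤ) : Prop :=
  LevelLoop h L H ∧ L ⊆ Inside Lm ∧ Surrounds L {((0 : ℤ), (0 : ℤ))} ∧ |H - Hm| = 2

/-- `(L_0, …, L_M)` with heights `(H_0, …, H_M)` is the sequence of essential level loops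
of `h` in the domain `D`: `L_0 = ∂D` with `H_0 = 0`, each `L_{m+1}` is the outermost level
loop surrounding the origin inside the region enclosed by `L_m` whose height differs by
`±2`, and no such loop exists inside `L_M`. -/
def EssSeq (D : Set V2) (h : V2 → ℤ) (M : ℕ) (L : ℕ → Set V2) (H : ℕ → ℤ) : Prop :=
  L 0 = bdry D ∧ H 0 = 0 ∧
  (∀ m < M, NextLoop h (L m) (H m) (L (m + 1)) (H (m + 1)) ∧
    ∀ L' H', NextLoop h (L m) (H m) L' H' → Encl L' ⊆ Encl (L (m + 1))) ∧
  ∀ L' H', ¬ NextLoop h (L M) (H M) L' H'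

/-- The set of height functions on `D` obeying the boundary condition `(B, κ)`. -/
def HomSet (D B : Set V2) (κ : V2 → Set ℤ) : Set (V2 → ℤ) :=
  {h | HeightOn D h ∧ ∀ v ∈ B, h v ∈ κ v}

/-- Admissibility of the boundary condition `(B, κ)`. -/
def Admissible (D B : Set V2) (κ : V2 → Set ℤ) : Prop :=
  (HomSet D B κ).Nonempty ∧ (HomSet D B κ).Finite

/-- The uniform measure `φ^{B,κ}_D` on height functions obeying `(B, κ)`. -/
noncomputable def phiK (D B : Set V2) (κ : V2 → Set ℤ) : Measure (V2 → ℤ) :=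
  uniformOn (HomSet D B κ)

/-!
Fix `m < M` and reflect `h` about `H_m` inside the loop `L_m`, i.e. replace `h` by `2 H_m - h`
there. A vertex adjacent to the inside but not in it lies on `L_m`, where `h = H_m`, so this is
again a height function vanishing on `∂D`. The essential loops do not move: a `×`-connected set
on which `h` stays at distance at least two from `H_m` cannot cross the level loop `L_m`, since a
diagonal step across it passes next to a vertex of `L_m`. Only the heights beyond `m` change, to
`2 H_m - H_j`, so the increments from the `m`-th on change sign. The reflection is an involution
of the height functions, so flipping the signs of a suffix of the increments does not change the
probability, and any two sign sequences differ by a composition of such suffix flips.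
-/

theorem Nat.exists_crossing {P : ℕ → Prop} :
    ∀ {n : ℕ}, P 0 → ¬ P n → ∃ i < n, P i ∧ ¬ P (i + 1)
  | 0, h0, hn => absurd h0 hn
  | n + 1, h0, hn => by
    by_cases hPn : P n
    · exact ⟨n, n.lt_succ_self, hPn, hn⟩
    · obtain ⟨i, hi, hPi, hPi'⟩ := Nat.exists_crossing h0 hPn
      exact ⟨i, hi.trans n.lt_succ_self, hPi, hPi'⟩

lemma uniformOn_eq_of_involutive {Ω : Type*} [MeasurableSpace Ω] [MeasurableSingletonClass Ω]
    {S A B : Set Ω} {T : Ω → Ω} (hT : Function.Involutive T)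
    (hAB : Set.MapsTo T (S ∩ A) (S ∩ B)) (hBA : Set.MapsTo T (S ∩ B) (S ∩ A)) :
    uniformOn S A = uniformOn S B := by
  have himage : T '' (S ∩ A) = S ∩ B :=
    hAB.image_subset.antisymm fun x hx => ⟨T x, hBA hx, hT x⟩
  by_cases hS : S.Finite
  · rw [uniformOn, cond_apply hS.measurableSet, cond_apply hS.measurableSet, ← himage,
      Measure.count_injective_image hT.injective]
  · simp [uniformOn_eq_zero.2 (Or.inl hS)]

def flipFrom {β : Type*} [Neg β] (m : ℕ) (t : ℕ → β) (i : ℕ) : β :=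
  if i < m then t i else -t i

lemma flipFrom_of_lt {β : Type*} [Neg β] {m i : ℕ} {t : ℕ → β} (hi : i < m) :
    flipFrom m t i = t i :=
  if_pos hi

lemma flipFrom_of_ge {β : Type*} [Neg β] {m i : ℕ} {t : ℕ → β} (hi : m ≤ i) :
    flipFrom m t i = -t i :=
  if_neg (not_lt.2 hi)

/-- Any sign change of the first `M` terms is a composition of suffix flips. -/
theorem eq_of_flipFrom_invariant {α β : Type*} [InvolutiveNeg β] (P : (ℕ → β) → α)
    {M : ℕ} (hflip : ∀ m < M, ∀ t, P (flipFrom m t) = P t)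
    (hcongr : ∀ t t', (∀ i < M, t i = t' i) → P t = P t') {s s' : ℕ → β}
    (hss' : ∀ i < M, s' i = s i ∨ s' i = -s i) : P s = P s' := by
  have key : ∀ k ≤ M, ∃ t, P t = P s ∧ (∀ i < M, t i = s i ∨ t i = -s i) ∧
      ∀ i < k, t i = s' i := by
    intro k hk
    induction k with
    | zero => exact ⟨s, rfl, fun i _ => Or.inl rfl, fun i hi => absurd hi (Nat.not_lt_zero i)⟩
    | succ k ih =>
      obtain ⟨t, hPt, hts, hts'⟩ := ih (by omega)
      by_cases htk : t k = s' k
      · exact ⟨t, hPt, hts, fun i hi =>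
          (Nat.lt_succ_iff_lt_or_eq.1 hi).elim (hts' i) fun hik => hik ▸ htk⟩
      refine ⟨flipFrom k t, (hflip k (by omega) t).trans hPt, fun i hi => ?_, fun i hi => ?_⟩
      · rcases lt_or_ge i k with hik | hik
        · rw [flipFrom_of_lt hik]
          exact hts i hi
        · rw [flipFrom_of_ge hik]
          rcases hts i hi with h | h <;> simp [h]
      · rcases lt_or_ge i k with hik | hik
        · rw [flipFrom_of_lt hik]
          exact hts' i hik
        obtain rfl : i = k := by omega
        rw [flipFrom_of_ge le_rfl]
        rcases hts i (by omega) with h | h <;> rcases hss' i (by omega) with h' | h' <;>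
          simp_all
  obtain ⟨t, hPt, -, hts'⟩ := key M le_rfl
  exact hPt.symm.trans (hcongr t s' hts')

def reflectFrom (m : ℕ) (H : ℕ → ℤ) (j : ℕ) : ℤ := if j < m then H j else 2 * H m - H j

section reflectFrom

variable {m j : ℕ} {H : ℕ → ℤ}

lemma reflectFrom_of_le (hj : j ≤ m) : reflectFrom m H j = H j := by
  unfold reflectFrom
  split_ifs with hjm
  · rfl
  · rw [le_antisymm hj (not_lt.1 hjm)]
    ring

lemma reflectFrom_of_ge (hj : m ≤ j) : reflectFrom m H j = 2 * H m - H j :=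
  if_neg (not_lt.2 hj)

lemma reflectFrom_self : reflectFrom m H m = H m :=
  reflectFrom_of_le le_rfl

lemma reflectFrom_reflectFrom : reflectFrom m (reflectFrom m H) = H := by
  funext j
  rcases le_total j m with hj | hj
  · rw [reflectFrom_of_le hj, reflectFrom_of_le hj]
  · rw [reflectFrom_of_ge hj, reflectFrom_of_ge hj, reflectFrom_self]
    ring

lemma abs_reflectFrom_succ_sub :
    |reflectFrom m H (j + 1) - reflectFrom m H j| = |H (j + 1) - H j| := by
  rcases lt_or_ge j m with hj | hj
  · rw [reflectFrom_of_le hj, reflectFrom_of_le hj.le]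
  · rw [reflectFrom_of_ge (by omega), reflectFrom_of_ge hj, ← abs_neg]
    ring_nf

end reflectFrom

lemma sum_range_flipFrom (m : ℕ) (t : ℕ → ℤ) :
    (fun j => ∑ i ∈ Finset.range j, flipFrom m t i) =
      reflectFrom m fun j => ∑ i ∈ Finset.range j, t i := by
  funext j
  rcases lt_or_ge j m with hj | hj
  · rw [reflectFrom_of_le hj.le]
    exact Finset.sum_congr rfl fun i hi => flipFrom_of_lt ((Finset.mem_range.1 hi).trans hj)
  · rw [reflectFrom_of_ge hj, ← Finset.sum_range_add_sum_Ico _ hj,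
      ← Finset.sum_range_add_sum_Ico _ hj,
      Finset.sum_congr rfl fun i hi => flipFrom_of_lt (Finset.mem_range.1 hi),
      Finset.sum_congr rfl fun i hi => flipFrom_of_ge (Finset.mem_Ico.1 hi).1,
      Finset.sum_neg_distrib]
    ring

lemma even_of_abs_sub_eq_two {a b : ℤ} (hb : Even b) (hab : |a - b| = 2) : Even a := by
  have := hb.add (even_abs.1 (hab ▸ even_two))
  rwa [add_sub_cancel] at this

lemma adj2_comm {u v : V2} : Adj2 u v ↔ Adj2 v u := by
  simp only [Adj2, abs_sub_comm]

-- `Inside L` unfolds to `{x | x ∉ L ∧ (Reach L x).Finite}`.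
def Reach (L : Set V2) (x : V2) : Set V2 :=
  {y | ∃ (m : ℕ) (p : ℕ → V2),
    p 0 = x ∧ p m = y ∧ (∀ i ≤ m, p i ∉ L) ∧ ∀ i < m, Adj2 (p i) (p (i + 1))}

section Inside

variable {L L' K D : Set V2} {u v w x : V2}

lemma disjoint_inside_self : Disjoint L (Inside L) :=
  Set.disjoint_left.2 fun _ hx hxi => hxi.1 hx

lemma reach_subset_of_adj (hu : u ∉ L) (huv : Adj2 u v) : Reach L v ⊆ Reach L u := by
  rintro y ⟨m, p, hp0, hpm, hpL, hpadj⟩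
  refine ⟨m + 1, fun i => if i = 0 then u else p (i - 1), by simp, by simpa using hpm, ?_, ?_⟩
  · rintro (_ | i) hi
    · simpa using hu
    · simpa using hpL i (by omega)
  · rintro (_ | i) hi
    · simpa [hp0] using huv
    · simpa using hpadj i (by omega)

lemma mem_inside_of_adj (hu : u ∈ Inside L) (hv : v ∉ L) (huv : Adj2 u v) : v ∈ Inside L :=
  ⟨hv, hu.2.subset (reach_subset_of_adj hu.1 huv)⟩

lemma encl_subset_encl (h : L' ⊆ Inside L) : Encl L' ⊆ Encl L := by
  rintro x (hx | hx)
  · exact Or.inr (h hx)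
  by_contra hxE
  -- a path avoiding `L` cannot enter `Encl L` from outside, so it never meets `L' ⊆ Encl L`
  have hsub : Reach L x ⊆ Reach L' x := by
    rintro y ⟨m, p, hp0, hpm, hpL, hpadj⟩
    refine ⟨m, p, hp0, hpm, fun i hi hpi => ?_, hpadj⟩
    obtain ⟨k, hk, hkout, hkin⟩ := Nat.exists_crossing (P := fun k => p k ∉ Encl L)
      (hp0 ▸ hxE) (not_not.2 (Or.inr (h hpi)))
    have hkin : p (k + 1) ∈ Inside L := (not_not.1 hkin).resolve_left (hpL _ (by omega))
    exact hkout (Or.inr (mem_inside_of_adj hkin (hpL k (by omega))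
      (adj2_comm.1 (hpadj k (by omega)))))
  exact hxE (Or.inr ⟨fun hxL => hxE (Or.inl hxL), hx.2.subset hsub⟩)

lemma exists_mem_not_mem_inside (hfin : (Encl L).Finite) (hne : L.Nonempty)
    (hL' : L' ⊆ Inside L) : ∃ a ∈ L, a ∉ Inside L' := by
  -- the rightmost point `a` of `Encl L` lies on `L`, and its right neighbour is outside `Encl L`
  obtain ⟨a, haE, hamax⟩ := hfin.exists_maximalFor Prod.fst _ (hne.mono Set.subset_union_left)
  set b : V2 := (a.1 + 1, a.2)
  have hbE : b ∉ Encl L := fun hb => by simpa [b] using hamax hb (by simp [b])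
  have hab : Adj2 a b := by simp [Adj2, b]
  have haL : a ∈ L :=
    haE.resolve_right fun ha => hbE (Or.inr (mem_inside_of_adj ha (fun hb => hbE (Or.inl hb)) hab))
  refine ⟨a, haL, fun ha => hbE (encl_subset_encl hL' (Or.inr (mem_inside_of_adj ha ?_ hab)))⟩
  exact fun hb => hbE (Or.inr (hL' hb))

lemma reach_infinite (hfin : D.Finite) (hconn : ConnIn Adj2 Dᶜ) (hK : K ⊆ D) (hx : x ∉ D) :
    (Reach K x).Infinite := by
  refine hfin.infinite_compl.mono fun y hy => ?_
  obtain ⟨m, p, hp0, hpm, hpD, hpadj⟩ := hconn x hx y hy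
  exact ⟨m, p, hp0, hpm, fun i hi hpK => hpD i hi (hK hpK), hpadj⟩

lemma inside_subset (hfin : D.Finite) (hconn : ConnIn Adj2 Dᶜ) (hK : K ⊆ D) : Inside K ⊆ D :=
  fun _ hx => by_contra fun hxD => reach_infinite hfin hconn hK hxD hx.2

lemma encl_subset (hfin : D.Finite) (hconn : ConnIn Adj2 Dᶜ) (hK : K ⊆ D) : Encl K ⊆ D :=
  Set.union_subset hK (inside_subset hfin hconn hK)

lemma not_mem_inside_of_mem_bdry (hfin : D.Finite) (hconn : ConnIn Adj2 Dᶜ) (hK : K ⊆ D)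
    (hx : x ∈ bdry D) : x ∉ Inside K := by
  obtain ⟨-, u, hux, huD⟩ := hx
  exact fun hxK => huD (inside_subset hfin hconn hK
    (mem_inside_of_adj hxK (fun huK => huD (hK huK)) (adj2_comm.1 hux)))

lemma mem_or_exists_adj2_mem_of_xAdj (huw : XAdj u w) (hu : u ∈ Inside K) (hw : w ∉ Inside K) :
    w ∈ K ∨ ∃ r ∈ K, Adj2 u r := by
  refine or_iff_not_imp_left.2 fun hwK => ⟨(w.1, u.2), ?_, ?_⟩
  · by_contra hr
    have hur : Adj2 u (w.1, u.2) := by simp [Adj2, huw.1]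
    have hrw : Adj2 (w.1, u.2) w := by simp [Adj2, huw.2]
    exact hw (mem_inside_of_adj (mem_inside_of_adj hu hr hur) hwK hrw)
  · simp [Adj2, huw.1]

lemma mem_inside_of_xConn {h : V2 → ℤ} {c : ℤ} (hH : HeightOn D h) (hKD : Encl K ⊆ D)
    (hK : ∀ v ∈ K, h v = c) (hL' : ConnIn XAdj L') (hfar : ∀ v ∈ L', 1 < |h v - c|)
    (hu : u ∈ L') (hw : w ∈ L') (hui : u ∈ Inside K) : w ∈ Inside K := by
  by_contra hwi
  obtain ⟨n, p, rfl, rfl, hpL', hpadj⟩ := hL' _ hu _ hw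
  obtain ⟨i, hi, hin, hout⟩ := Nat.exists_crossing (P := fun i => p i ∈ Inside K) hui hwi
  rcases mem_or_exists_adj2_mem_of_xAdj (hpadj i hi) hin hout with hK' | ⟨r, hr, hadj⟩
  · simpa [hK _ hK'] using hfar _ (hpL' _ hi)
  · have hgrad := hH.1 _ (hKD (Or.inr hin)) _ (hKD (Or.inl hr)) hadj
    rw [hK r hr] at hgrad
    exact (hfar _ (hpL' i hi.le)).ne' hgrad

end Inside

def zeroBoundaryHeights (D : Set V2) : Set (V2 → ℤ) :=
  {h | HeightOn D h ∧ ∀ v ∈ bdry D, h v = 0}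

lemma phiBC_zero (D : Set V2) : phiBC D 0 = uniformOn (zeroBoundaryHeights D) := rfl

namespace EssSeq

variable {D : Set V2} {h : V2 → ℤ} {M : ℕ} {L : ℕ → Set V2} {H : ℕ → ℤ} {j m : ℕ}

lemma congr_heights {H' : ℕ → ℤ} (hHH' : ∀ j ≤ M, H j = H' j) :
    EssSeq D h M L H ↔ EssSeq D h M L H' := by
  unfold EssSeq
  rw [hHH' 0 (Nat.zero_le M), hHH' M le_rfl]
  refine and_congr_right' (and_congr_right' (and_congr_left' (forall₂_congr fun j hj => ?_)))
  rw [hHH' j hj.le, hHH' (j + 1) hj]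

lemma nextLoop (hE : EssSeq D h M L H) (hj : j < M) :
    NextLoop h (L j) (H j) (L (j + 1)) (H (j + 1)) :=
  (hE.2.2.1 j hj).1

lemma encl_subset_of_nextLoop (hE : EssSeq D h M L H) (hj : j < M) {L' : Set V2} {a : ℤ}
    (hL' : NextLoop h (L j) (H j) L' a) : Encl L' ⊆ Encl (L (j + 1)) :=
  (hE.2.2.1 j hj).2 L' a hL'

lemma level (hB : ∀ v ∈ bdry D, h v = 0) (hE : EssSeq D h M L H) :
    ∀ j ≤ M, ∀ v ∈ L j, h v = H j
  | 0, _, v, hv => by rw [hB v (hE.1 ▸ hv), hE.2.1]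
  | _ + 1, hj, v, hv => (hE.nextLoop hj).1.2 v hv

lemma even_height (hE : EssSeq D h M L H) : ∀ j ≤ M, Even (H j)
  | 0, _ => hE.2.1 ▸ Even.zero
  | j + 1, hj => even_of_abs_sub_eq_two (hE.even_height j (by omega)) (hE.nextLoop hj).2.2.2

lemma subset_domain (hD : IsDomain2 D) (hE : EssSeq D h M L H) : ∀ j ≤ M, L j ⊆ D
  | 0, _ => hE.1 ▸ fun _ hv => hv.1
  | j + 1, hj => (hE.nextLoop hj).2.1.trans
      (inside_subset hD.1 hD.2.1.2 (hE.subset_domain hD j (by omega)))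

lemma encl_subset_domain (hD : IsDomain2 D) (hE : EssSeq D h M L H) (hj : j ≤ M) :
    Encl (L j) ⊆ D :=
  encl_subset hD.1 hD.2.1.2 (hE.subset_domain hD j hj)

lemma disjoint_inside_succ (hD : IsDomain2 D) (hh : h ∈ zeroBoundaryHeights D)
    (hE : EssSeq D h M L H) (hj : j < M) : Disjoint (L j) (Inside (L (j + 1))) := by
  rw [Set.disjoint_left]
  rcases j with _ | j
  · exact fun x hx => not_mem_inside_of_mem_bdry hD.1 hD.2.1.2 (hE.subset_domain hD 1 hj)
      (hE.1 ▸ hx)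
  -- `L (j + 1)` has a point outside `L (j + 2)`, and cannot cross that level loop
  obtain ⟨a, ha, hao⟩ := exists_mem_not_mem_inside
    (hD.1.subset (hE.encl_subset_domain hD (by omega))) (hE.nextLoop (by omega)).1.1.2.1
    (hE.nextLoop hj).2.1
  have hfar : ∀ v ∈ L (j + 1), 1 < |h v - H (j + 2)| := fun v hv => by
    rw [hE.level hh.2 _ (by omega) v hv, abs_sub_comm, (hE.nextLoop hj).2.2.2]
    norm_num
  exact fun x hx hxi => hao (mem_inside_of_xConn hh.1 (hE.encl_subset_domain hD hj)
    (hE.level hh.2 _ hj) (hE.nextLoop (by omega)).1.1.2.2.1 hfar hx ha hxi)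

lemma encl_succ_subset_inside (hD : IsDomain2 D) (hh : h ∈ zeroBoundaryHeights D)
    (hE : EssSeq D h M L H) (hj : j < M) :
    Encl (L (j + 1)) ⊆ Inside (L j) := by
  rintro x (hx | hx)
  · exact (hE.nextLoop hj).2.1 hx
  · exact (encl_subset_encl (hE.nextLoop hj).2.1 (Or.inr hx)).resolve_left fun hxL =>
      Set.disjoint_left.1 (hE.disjoint_inside_succ hD hh hj) hxL hx

lemma encl_subset_inside (hD : IsDomain2 D) (hh : h ∈ zeroBoundaryHeights D)
    (hE : EssSeq D h M L H) (hjm : j < m) (hm : m ≤ M) :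
    Encl (L m) ⊆ Inside (L j) := by
  induction m, hjm using Nat.le_induction with
  | base => exact hE.encl_succ_subset_inside hD hh hm
  | succ m hjm ih =>
    exact (hE.encl_succ_subset_inside hD hh hm).trans
      (Set.subset_union_right.trans (ih (by omega)))

lemma inside_subset_inside_of_le (hD : IsDomain2 D) (hh : h ∈ zeroBoundaryHeights D)
    (hE : EssSeq D h M L H) (hjm : j ≤ m) (hm : m ≤ M) :
    Inside (L m) ⊆ Inside (L j) := by
  rcases hjm.eq_or_lt with rfl | hlt
  · exact subset_rfl
  · exact Set.subset_union_right.trans (hE.encl_subset_inside hD hh hlt hm)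

lemma encl_subset_encl_of_le (hD : IsDomain2 D) (hh : h ∈ zeroBoundaryHeights D)
    (hE : EssSeq D h M L H) (hjm : j ≤ m) (hm : m ≤ M) :
    Encl (L m) ⊆ Encl (L j) := by
  rcases hjm.eq_or_lt with rfl | hlt
  · exact subset_rfl
  · exact (hE.encl_subset_inside hD hh hlt hm).trans Set.subset_union_right

lemma disjoint_inside (hD : IsDomain2 D) (hh : h ∈ zeroBoundaryHeights D)
    (hE : EssSeq D h M L H) (hjm : j ≤ m) (hm : m ≤ M) :
    Disjoint (L j) (Inside (L m)) :=
  disjoint_inside_self.mono_right (hE.inside_subset_inside_of_le hD hh hjm hm)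

end EssSeq

noncomputable def reflectInside (K : Set V2) (c : ℤ) (h : V2 → ℤ) : V2 → ℤ :=
  fun v => if v ∈ Inside K then 2 * c - h v else h v

section reflectInside

variable {D K L : Set V2} {c a : ℤ} {h : V2 → ℤ} {u v : V2}

lemma reflectInside_of_mem (hv : v ∈ Inside K) : reflectInside K c h v = 2 * c - h v :=
  if_pos hv

lemma reflectInside_of_not_mem (hv : v ∉ Inside K) : reflectInside K c h v = h v :=
  if_neg hv

lemma reflectInside_involutive : Function.Involutive (reflectInside K c) := fun h => by
  funext v
  by_cases hv : v ∈ Inside K <;> simp [reflectInside, hv]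

lemma abs_reflectInside_sub (hK : ∀ v ∈ K, h v = c) (huv : Adj2 u v) :
    |reflectInside K c h u - reflectInside K c h v| = |h u - h v| := by
  have hK' : ∀ {x y}, Adj2 x y → x ∈ Inside K → y ∉ Inside K → h y = c :=
    fun hxy hx hy =>    hK _ (by_contra fun hyK => hy (mem_inside_of_adj hx hyK hxy))
  by_cases hu : u ∈ Inside K <;> by_cases hv : v ∈ Inside K
  · rw [reflectInside_of_mem hu, reflectInside_of_mem hv, abs_sub_comm (h u)]
    ring_nf
  · rw [reflectInside_of_mem hu, reflectInside_of_not_mem hv, ← hK' huv hu hv,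
      abs_sub_comm (h u)]
    ring_nf
  · rw [reflectInside_of_not_mem hu, reflectInside_of_mem hv, ← hK' (adj2_comm.1 huv) hv hu,
      abs_sub_comm (h u)]
    ring_nf
  · rw [reflectInside_of_not_mem hu, reflectInside_of_not_mem hv]

lemma heightOn_reflectInside (hH : HeightOn D h) (hK : ∀ v ∈ K, h v = c)
    (hKD : Inside K ⊆ D) : HeightOn D (reflectInside K c h) := by
  refine ⟨fun u hu v hv huv => (abs_reflectInside_sub hK huv).trans (hH.1 u hu v hv huv),
    fun v hv hev => ?_, fun v hv => ?_⟩
  · by_cases hvK : v ∈ Inside K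
    · exact reflectInside_of_mem hvK ▸ (even_two_mul c).sub (hH.2.1 v hv hev)
    · exact reflectInside_of_not_mem hvK ▸ hH.2.1 v hv hev
  · rw [reflectInside_of_not_mem fun hvK => hv (hKD hvK), hH.2.2 v hv]

lemma levelLoop_reflectInside_iff_of_subset (hL : L ⊆ Inside K) :
    LevelLoop (reflectInside K c h) L a ↔ LevelLoop h L (2 * c - a) := by
  refine and_congr_right' (forall₂_congr fun v hv => ?_)
  rw [reflectInside_of_mem (hL hv)]
  omega

lemma levelLoop_reflectInside_iff_of_disjoint (hL : Disjoint L (Inside K)) :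
    LevelLoop (reflectInside K c h) L a ↔ LevelLoop h L a := by
  refine and_congr_right' (forall₂_congr fun v hv => ?_)
  rw [reflectInside_of_not_mem (Set.disjoint_left.1 hL hv)]

lemma levelLoop_of_levelLoop_reflectInside (hH : HeightOn D h) (hKD : Encl K ⊆ D)
    (hK : ∀ v ∈ K, h v = c) (hc : Even c) (ha : Even a)
    (hL : LevelLoop (reflectInside K c h) L a) :
    L ⊆ Inside K ∧ LevelLoop h L (2 * c - a) ∨ LevelLoop h L a := by
  have hval : ∀ v ∈ L, h v = a ∨ h v = 2 * c - a := fun v hv => by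
    have := hL.2 v hv
    unfold reflectInside at this
    split_ifs at this <;> omega
  by_cases hac : a = c
  · exact Or.inr ⟨hL.1, fun v hv => by rcases hval v hv with h' | h' <;> omega⟩
  -- both values are at distance at least two from `c`, so `L` cannot cross `K`
  have hfar : ∀ v ∈ L, 1 < |h v - c| := fun v hv => by
    obtain ⟨k, rfl⟩ := hc
    obtain ⟨l, rfl⟩ := ha
    rw [lt_abs]
    rcases hval v hv with h' | h' <;> omega
  by_cases hin : ∃ u ∈ L, u ∈ Inside K
  · obtain ⟨u, hu, hui⟩ := hin
    have hsub : L ⊆ Inside K := fun w hw =>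
      mem_inside_of_xConn hH hKD hK hL.1.2.2.1 hfar hu hw hui
    exact Or.inl ⟨hsub, (levelLoop_reflectInside_iff_of_subset hsub).1 hL⟩
  · push Not at hin
    exact Or.inr ((levelLoop_reflectInside_iff_of_disjoint (Set.disjoint_left.2 hin)).1 hL)

end reflectInside

namespace EssSeq

variable {D : Set V2} {h : V2 → ℤ} {M : ℕ} {L : ℕ → Set V2} {H : ℕ → ℤ} {j m : ℕ}

lemma reflectInside_mem (hD : IsDomain2 D) (hh : h ∈ zeroBoundaryHeights D)
    (hE : EssSeq D h M L H) (hm : m ≤ M) :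
    reflectInside (L m) (H m) h ∈ zeroBoundaryHeights D :=
  ⟨heightOn_reflectInside hh.1 (hE.level hh.2 m hm)
      (inside_subset hD.1 hD.2.1.2 (hE.subset_domain hD m hm)),
    fun v hv => by
      rw [reflectInside_of_not_mem (Set.disjoint_left.1
        (hE.disjoint_inside hD hh (Nat.zero_le m) hm) (hE.1 ▸ hv)), hh.2 v hv]⟩

lemma reflectInside_level (hD : IsDomain2 D) (hh : h ∈ zeroBoundaryHeights D)
    (hE : EssSeq D h M L H) (hm : m ≤ M) (hj : j ≤ M) :
    ∀ v ∈ L j, reflectInside (L m) (H m) h v = reflectFrom m H j := by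
  intro v hv
  rcases le_or_gt j m with hjm | hmj
  · rw [reflectInside_of_not_mem (Set.disjoint_left.1 (hE.disjoint_inside hD hh hjm hm) hv),
      reflectFrom_of_le hjm, hE.level hh.2 j hj v hv]
  · rw [reflectInside_of_mem (hE.encl_subset_inside hD hh hmj hj (Or.inl hv)),
      reflectFrom_of_ge hmj.le, hE.level hh.2 j hj v hv]

lemma nextLoop_of_nextLoop_reflectInside_of_le (hD : IsDomain2 D) (hh : h ∈ zeroBoundaryHeights D)
    (hE : EssSeq D h M L H) (hmj : m ≤ j) (hj : j ≤ M)
    {L' : Set V2} {a : ℤ}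
    (hL' : NextLoop (reflectInside (L m) (H m) h) (L j) (reflectFrom m H j) L' a) :
    NextLoop h (L j) (H j) L' (2 * H m - a) := by
  obtain ⟨hlevel, hsub, hsurr, hdiff⟩ := hL'
  refine ⟨(levelLoop_reflectInside_iff_of_subset
    (hsub.trans (hE.inside_subset_inside_of_le hD hh hmj hj))).1 hlevel, hsub, hsurr, ?_⟩
  rw [reflectFrom_of_ge hmj] at hdiff
  rw [abs_sub_comm] at hdiff
  convert hdiff using 2
  ring

lemma encl_subset_of_nextLoop_reflectInside_of_lt (hD : IsDomain2 D)
    (hh : h ∈ zeroBoundaryHeights D)    (hE : EssSeq D h M L H) (hjm : j < m) (hm : m ≤ M)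
    {L' : Set V2} {a : ℤ}
    (hL' : NextLoop (reflectInside (L m) (H m) h) (L j) (reflectFrom m H j) L' a) :
    Encl L' ⊆ Encl (L (j + 1)) := by
  obtain ⟨hlevel, hsub, hsurr, hdiff⟩ := hL'
  rw [reflectFrom_of_le hjm.le] at hdiff
  rcases levelLoop_of_levelLoop_reflectInside hh.1 (hE.encl_subset_domain hD hm)
    (hE.level hh.2 m hm) (hE.even_height m hm)
    (even_of_abs_sub_eq_two (hE.even_height j (by omega)) hdiff)
    hlevel with ⟨hin, -⟩ | hlevel'
  · exact (_root_.encl_subset_encl hin).trans (hE.encl_subset_encl_of_le hD hh hjm hm)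
  · exact hE.encl_subset_of_nextLoop (by omega) ⟨hlevel', hsub, hsurr, hdiff⟩

theorem reflect (hD : IsDomain2 D) (hh : h ∈ zeroBoundaryHeights D)
    (hE : EssSeq D h M L H) (hm : m < M) :
    EssSeq D (reflectInside (L m) (H m) h) M L (reflectFrom m H) := by
  refine ⟨hE.1, (reflectFrom_of_le (Nat.zero_le m)).trans hE.2.1,
    fun j hj => ⟨?_, fun L' a hL' => ?_⟩, fun L' a hL' => ?_⟩
  · obtain ⟨⟨hloop, -⟩, hsub, hsurr, hdiff⟩ := hE.nextLoop hj
    exact ⟨⟨hloop, hE.reflectInside_level hD hh hm.le hj⟩, hsub, hsurr,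
      abs_reflectFrom_succ_sub.trans hdiff⟩
  · rcases lt_or_ge j m with hjm | hmj
    · exact hE.encl_subset_of_nextLoop_reflectInside_of_lt hD hh hjm hm.le hL'
    · exact hE.encl_subset_of_nextLoop hj
        (hE.nextLoop_of_nextLoop_reflectInside_of_le hD hh hmj hj.le hL')
  · exact hE.2.2.2 L' _ (hE.nextLoop_of_nextLoop_reflectInside_of_le hD hh hm.le le_rfl hL')

end EssSeq

lemma phiBC_essSeq_eq_reflectFrom {D : Set V2} (hD : IsDomain2 D) {M m : ℕ} (hm : m < M)
    (L : ℕ → Set V2) (H : ℕ → ℤ) :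
    phiBC D 0 {h | EssSeq D h M L H} = phiBC D 0 {h | EssSeq D h M L (reflectFrom m H)} := by
  have hmaps : ∀ H : ℕ → ℤ, Set.MapsTo (reflectInside (L m) (H m))
      (zeroBoundaryHeights D ∩ {h | EssSeq D h M L H})
      (zeroBoundaryHeights D ∩ {h | EssSeq D h M L (reflectFrom m H)}) :=
    fun H h ⟨hh, hE⟩ => ⟨hE.reflectInside_mem hD hh hm.le, hE.reflect hD hh hm⟩
  rw [phiBC_zero]
  refine uniformOn_eq_of_involutive reflectInside_involutive (hmaps H) ?_
  simpa only [reflectFrom_self, reflectFrom_reflectFrom] using hmaps (reflectFrom m H)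

theorem essential_loop_heights_are_simple_random_walk_general
    (D : Set V2) (hD : IsDomain2 D)
    (M : ℕ) (L : ℕ → Set V2) (s s' : ℕ → ℤ)
    (hs : ∀ m < M, s m = 2 ∨ s m = -2) (hs' : ∀ m < M, s' m = 2 ∨ s' m = -2) :
    phiBC D 0 {h | EssSeq D h M L fun m => ∑ i ∈ Finset.range m, s i} =
      phiBC D 0 {h | EssSeq D h M L fun m => ∑ i ∈ Finset.range m, s' i} := by
  refine eq_of_flipFrom_invariant (M := M)
    (fun t => phiBC D 0 {h | EssSeq D h M L fun m => ∑ i ∈ Finset.range m, t i})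
    (fun m hm t => ?_) (fun t t' htt' => ?_) fun i hi => ?_
  · rw [sum_range_flipFrom]
    exact (phiBC_essSeq_eq_reflectFrom hD hm L _).symm
  · have hsums : ∀ j ≤ M, ∑ i ∈ Finset.range j, t i = ∑ i ∈ Finset.range j, t' i :=
      fun j hj => Finset.sum_congr rfl fun i hi => htt' i ((Finset.mem_range.1 hi).trans_le hj)
    congr 1
    ext h
    exact EssSeq.congr_heights hsums
  · rcases hs i hi with h | h <;> rcases hs' i hi with h' | h' <;> simp [h, h']

/-- Conditioned on the sequence of essential level loops, the height
increments are i.i.d. uniform on `{-2, +2}`: the probability that the essential sequence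
equals a given sequence of loops with heights given by the partial sums of a sequence of
`±2` signs does not depend on the choice of signs. -/
theorem essential_loop_heights_are_simple_random_walk
    (D : Set V2) (hD : IsDomain2 D) (h0 : ((0 : ℤ), (0 : ℤ)) ∈ D)
    (M : ℕ) (L : ℕ → Set V2) (s s' : ℕ → ℤ)
    (hs : ∀ m < M, s m = 2 ∨ s m = -2) (hs' : ∀ m < M, s' m = 2 ∨ s' m = -2) :
    phiBC D 0 {h | EssSeq D h M L fun m => ∑ i ∈ Finset.range m, s i} =
      phiBC D 0 {h | EssSeq D h M L fun m => ∑ i ∈ Finset.range m, s' i} :=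
  essential_loop_heights_are_simple_random_walk_general D hD M L s s' hs hs'
end
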